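/- arXiv:cs/0609072 — 4 statements merged into one kernel-verified Lean document; each statement's English description precedes it below -/
import Mathlib

section
/- Every bijunctive logical relation is componentwise bijunctive: if R ⊆ {0,1}^r is closed under the coordinatewise ternary majority operation maj (equivalently, R is the set of solutions of a 2-CNF formula), then every connected component of G(R) is itself closed under coordinatewise majority (i.e., is bijunctive). -/
open SimpleGraph

/-- The solution graph of a set `D ⊆ {0,1}^V`: vertices are the elements of `D`,
two vertices are adjacent iff they differ in exactly one coordinate. -/
def solGraph {V : Type*} [Fintype V] [DecidableEq V] (D : Set (V → Bool)) :
    SimpleGraph D where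
  Adj a b := hammingDist (a : V → Bool) (b : V → Bool) = 1
  symm := ⟨fun a b h => by
    have h' : hammingDist (a : V → Bool) (b : V → Bool) = 1 := h
    show hammingDist (b : V → Bool) (a : V → Bool) = 1
    rwa [hammingDist_comm]⟩
  loopless := ⟨fun a h => by
    have h' : hammingDist (a : V → Bool) (a : V → Bool) = 1 := h
    simp [hammingDist_self] at h'⟩

/-- Coordinatewise ternary majority. -/
def majVec {V : Type*} (a b c : V → Bool) : V → Bool :=
  fun i => (a i && b i) || (b i && c i) || (a i && c i)

/-- `D` is closed under the coordinatewise ternary majority operation. -/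
def ClosedMaj {V : Type*} (D : Set (V → Bool)) : Prop :=
  ∀ a b c, a ∈ D → b ∈ D → c ∈ D → majVec a b c ∈ D

/-- Every connected component of `G(R)` is closed under coordinatewise majority. -/
def CompClosedMaj {V : Type*} [Fintype V] [DecidableEq V] (R : Set (V → Bool)) : Prop :=
  ∀ (a b c : V → Bool) (ha : a ∈ R) (hb : b ∈ R) (hc : c ∈ R),
    (solGraph R).Reachable ⟨a, ha⟩ ⟨b, hb⟩ →
    (solGraph R).Reachable ⟨a, ha⟩ ⟨c, hc⟩ →
    ∃ hm : majVec a b c ∈ R, (solGraph R).Reachable ⟨a, ha⟩ ⟨majVec a b c, hm⟩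

/-- Substitute constants `c` in all but the two coordinates `i ≠ j`. -/
def subst2 {r : ℕ} (i j : Fin r) (c : Fin r → Bool) (x y : Bool) : Fin r → Bool :=
  fun k => if k = i then x else if k = j then y else c k

/-- `R` is OR-free: `{01,10,11}` is not obtainable from `R` by fixing `r - 2` coordinates. -/
def ORfree {r : ℕ} (R : Set (Fin r → Bool)) : Prop :=
  ¬ ∃ (i j : Fin r) (_ : i ≠ j) (c : Fin r → Bool),
      ∀ x y : Bool, subst2 i j c x y ∈ R ↔ (x || y) = true

/-- `R` is NAND-free: `{00,01,10}` is not obtainable from `R` by fixing `r - 2` coordinates. -/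
def NANDfree {r : ℕ} (R : Set (Fin r → Bool)) : Prop :=
  ¬ ∃ (i j : Fin r) (_ : i ≠ j) (c : Fin r → Bool),
      ∀ x y : Bool, subst2 i j c x y ∈ R ↔ (!x || !y) = true

/-- A logical relation together with its arity. -/
def BRel := Σ k : ℕ, Set (Fin k → Bool)

/-- A clause `R(ξ₁,…,ξ_k)` over variables `V`: each argument is a variable or a constant. -/
structure BClause (V : Type*) where
  arity : ℕ
  rel : Set (Fin arity → Bool)
  args : Fin arity → V ⊕ Bool

/-- The clause `C` is satisfied by the assignment `x`. -/
def BClause.Sat {V : Type*} (C : BClause V) (x : V → Bool) : Prop :=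
  (fun j => Sum.elim x id (C.args j)) ∈ C.rel

/-- A CNF formula: a finite conjunction (list) of clauses. -/
abbrev BCnf (V : Type*) := List (BClause V)

/-- `x` satisfies every clause of `φ`. -/
def BCnf.Sat {V : Type*} (φ : BCnf V) (x : V → Bool) : Prop :=
  ∀ C ∈ φ, C.Sat x

/-- `φ` is a CNF(S)-formula: every clause uses a relation from `S`. -/
def BCnf.Over {V : Type*} (S : Set BRel) (φ : BCnf V) : Prop :=
  ∀ C ∈ φ, (⟨C.arity, C.rel⟩ : BRel) ∈ S

/-- The set of solutions of a CNF formula. -/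
def solutionSet {V : Type*} (φ : BCnf V) : Set (V → Bool) := {x | φ.Sat x}

/-- A set of relations is tight if all its members are componentwise bijunctive,
or all are OR-free, or all are NAND-free. -/
def Tight (S : Set BRel) : Prop :=
  (∀ R ∈ S, CompClosedMaj R.2) ∨ (∀ R ∈ S, ORfree R.2) ∨ (∀ R ∈ S, NANDfree R.2)

/-- `R` is faithfully expressible from `S`. -/
def FaithfullyExpressible (S : Set BRel) {k : ℕ} (R : Set (Fin k → Bool)) : Prop :=
  ∃ (m : ℕ) (φ : BCnf (Fin k ⊕ Fin m)),
    φ.Over S ∧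
    (∀ a : Fin k → Bool, a ∈ R ↔ ∃ y : Fin m → Bool, φ.Sat (Sum.elim a y)) ∧
    (∀ a ∈ R, (solGraph {y : Fin m → Bool | φ.Sat (Sum.elim a y)}).Connected) ∧
    (∀ a b, a ∈ R → b ∈ R → hammingDist a b = 1 →
      ∃ w : Fin m → Bool, φ.Sat (Sum.elim a w) ∧ φ.Sat (Sum.elim b w))

/-- `D_i`: satisfying assignments of the 3-clause whose first `i` literals are negated. -/
def Dclause (i : ℕ) : Set (Fin 3 → Bool) :=
  {x | ∃ j : Fin 3, if (j : ℕ) < i then x j = false else x j = true}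

/-- `S₃ = {D₀, D₁, D₂, D₃}`: the set of 3-clause relations. -/
def S3 : Set BRel :=
  {⟨3, Dclause 0⟩, ⟨3, Dclause 1⟩, ⟨3, Dclause 2⟩, ⟨3, Dclause 3⟩}

/-
For fixed `a` and `c`, the map `x ↦ maj(a, x, c)` acts coordinatewise, so it cannot increase
Hamming distance: it sends edges of `G(R)` to edges or single vertices, and (as `R` is closed
under majority) it maps `R` into `R`. Hence it maps the component of `a` into the component of
its image `maj(a, a, c) = a`, and so `maj(a, b, c)` lies in the component of `a` for every `b`
in it.
-/

theorem majVec_self_left {V : Type*} (a c : V → Bool) : majVec a a c = a := by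
  funext i
  unfold majVec
  cases a i <;> cases c i <;> rfl

section HammingGraph

variable {V : Type*} [Fintype V]

theorem hammingDist_majVec_le (a c x y : V → Bool) :
    hammingDist (majVec a x c) (majVec a y c) ≤ hammingDist x y :=
  hammingDist_comp_le_hammingDist (fun i t => (a i && t) || (t && c i) || (a i && c i))

variable [DecidableEq V]

theorem solGraph_adj_or_eq_of_hammingDist_le_one {D : Set (V → Bool)} {u v : D}
    (h : hammingDist (u : V → Bool) v ≤ 1) : (solGraph D).Adj u v ∨ u = v := by
  interval_cases hd : hammingDist (u : V → Bool) v
  · exact .inr (Subtype.ext (hammingDist_eq_zero.mp hd))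
  · exact .inl hd

theorem solGraph_reachable_map_of_hammingDist_le {D E : Set (V → Bool)} (f : D → E)
    (hf : ∀ u v, hammingDist (f u : V → Bool) (f v) ≤ hammingDist (u : V → Bool) v)
    {u v : D} (huv : (solGraph D).Reachable u v) : (solGraph E).Reachable (f u) (f v) := by
  rw [reachable_iff_reflTransGen] at huv ⊢
  refine huv.lift' f fun x y hxy => ?_
  have hdist : hammingDist (x : V → Bool) y = 1 := hxy
  rcases solGraph_adj_or_eq_of_hammingDist_le_one (hdist ▸ hf x y) with hadj | heq
  · exact .single hadj
  · rw [Function.onFun, heq]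

end HammingGraph

theorem bijunctive_is_componentwise_bijunctive_general {r : ℕ}
    (R : Set (Fin r → Bool))
    (hmaj : ClosedMaj R) :
    CompClosedMaj R := by
  intro a b c ha hb hc hab _
  let f : R → R := fun x => ⟨majVec a x c, hmaj a x c ha x.2 hc⟩
  have hfab := solGraph_reachable_map_of_hammingDist_le f
    (fun x y => hammingDist_majVec_le a c x y) hab
  have hfa : f ⟨a, ha⟩ = ⟨a, ha⟩ := Subtype.ext (majVec_self_left a c)
  exact ⟨(f ⟨b, hb⟩).2, hfa ▸ hfab⟩

/-- Every bijunctive relation (closed under coordinatewise majority)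
is componentwise bijunctive. -/
theorem bijunctive_is_componentwise_bijunctive {r : ℕ}
    (R : Set (Fin r → Bool)) (hR : R.Nonempty)
    (hmaj : ClosedMaj R) :
    CompClosedMaj R :=
  bijunctive_is_componentwise_bijunctive_general R hmaj
end

section
/- Every affine logical relation is componentwise bijunctive, OR-free, and NAND-free: if R ⊆ {0,1}^r is closed under the ternary coordinatewise operation a ⊕ b ⊕ c (equivalently, R is the set of solutions of a system of linear equations over Z_2), then (i) every connected component of G(R) is closed under coordinatewise majority, (ii) OR = {01,10,11} is not obtainable from R by fixing r−2 coordinates, and (iii) NAND = {00,01,10} is not obtainable from R by fixing r−2 coordinates. -/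
open SimpleGraph

/-!
An affine relation `R` contains `u ⊕ v ⊕ x` whenever it contains `u`, `v`, `x`. If `u v` is an
edge of `G(R)` in direction `i`, this says that flipping coordinate `i` maps `R` into itself, so
from any point of `R` one can walk, inside `R`, to the point with any set of edge directions
flipped. Along a walk from `a` to `b` every coordinate in which `a` and `b` differ is an edge
direction, and `maj(a, b, c)` is `a` with the coordinates flipped in which both `b` and `c` differ
from `a`; hence it lies in the component of `a`.

OR and NAND are not affine: the xor of three of their tuples is the fourth, which is missing, and
fixing coordinates of an affine relation gives an affine relation.
-/

def ClosedXor3 {V : Type*} (R : Set (V → Bool)) : Prop :=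
  ∀ a b c, a ∈ R → b ∈ R → c ∈ R → (fun i => xor (a i) (xor (b i) (c i))) ∈ R

section FlipAt

variable {V : Type*}

def flipAt [DecidableEq V] (s : Finset V) (x : V → Bool) : V → Bool :=
  fun k => if k ∈ s then !x k else x k

def diffCoords [Fintype V] (u v : V → Bool) : Finset V :=
  Finset.univ.filter fun k => u k ≠ v k

theorem hammingDist_eq_card_diffCoords [Fintype V] (u v : V → Bool) :
    hammingDist u v = (diffCoords u v).card :=
  rfl

theorem xor_xor_eq_flipAt_diffCoords [Fintype V] [DecidableEq V] (u v x : V → Bool) :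
    (fun k => xor (u k) (xor (v k) (x k))) = flipAt (diffCoords u v) x := by
  funext k
  simp only [flipAt, diffCoords, Finset.mem_filter, Finset.mem_univ, true_and]
  cases u k <;> cases v k <;> cases x k <;> rfl

theorem diffCoords_flipAt [Fintype V] [DecidableEq V] (s : Finset V) (x : V → Bool) :
    diffCoords x (flipAt s x) = s := by
  ext k
  by_cases hk : k ∈ s <;> simp [diffCoords, flipAt, hk]

theorem flipAt_empty [DecidableEq V] (x : V → Bool) : flipAt ∅ x = x := by
  funext k
  simp [flipAt]

theorem flipAt_insert [DecidableEq V] {i : V} {s : Finset V} (hi : i ∉ s) (x : V → Bool) :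
    flipAt (insert i s) x = flipAt {i} (flipAt s x) := by
  funext k
  by_cases hki : k = i
  · subst hki
    simp [flipAt, hi]
  · simp [flipAt, hki]

theorem diffCoords_subset_union [Fintype V] [DecidableEq V] (a b c : V → Bool) :
    diffCoords a c ⊆ diffCoords a b ∪ diffCoords b c := by
  intro k
  simp only [diffCoords, Finset.mem_union, Finset.mem_filter, Finset.mem_univ, true_and]
  by_contra! h
  exact h.1 (h.2.1.trans h.2.2)

theorem majVec_eq_flipAt [Fintype V] [DecidableEq V] (a b c : V → Bool) :
    majVec a b c = flipAt (diffCoords a b ∩ diffCoords a c) a := by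
  funext k
  simp only [majVec, flipAt, diffCoords, Finset.mem_inter, Finset.mem_filter, Finset.mem_univ,
    true_and]
  cases a k <;> cases b k <;> cases c k <;> rfl

end FlipAt

section EdgeDirections

variable {V : Type*} [Fintype V] [DecidableEq V] {R : Set (V → Bool)}

def edgeDirs (R : Set (V → Bool)) : Set V :=
  {i | ∃ u ∈ R, ∃ v ∈ R, diffCoords u v = {i}}

theorem diffCoords_subset_edgeDirs_of_walk {u v : R} (w : (solGraph R).Walk u v) :
    ↑(diffCoords u.1 v.1) ⊆ edgeDirs R := by
  induction w with
  | nil => simp [diffCoords]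
  | @cons p q t hpq _ ih =>
    have hpq : (diffCoords p.1 q.1).card = 1 := hpq
    obtain ⟨i, hi⟩ := Finset.card_eq_one.mp hpq
    have hp : ↑(diffCoords p.1 q.1) ⊆ edgeDirs R := by
      rw [hi, Finset.coe_singleton, Set.singleton_subset_iff]
      exact ⟨p, p.2, q, q.2, hi⟩
    calc (diffCoords p.1 t.1 : Set V)
        _ ⊆ ↑(diffCoords p.1 q.1 ∪ diffCoords q.1 t.1) := by
          exact_mod_cast diffCoords_subset_union _ _ _
        _ ⊆ edgeDirs R := by
          rw [Finset.coe_union]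
          exact Set.union_subset hp ih

theorem ClosedXor3.flipAt_singleton_mem (hR : ClosedXor3 R) {i : V} (hi : i ∈ edgeDirs R)
    {x : V → Bool} (hx : x ∈ R) : flipAt {i} x ∈ R := by
  obtain ⟨u, hu, v, hv, huv⟩ := hi
  simpa only [xor_xor_eq_flipAt_diffCoords, huv] using hR u v x hu hv hx

theorem ClosedXor3.exists_reachable_flipAt (hR : ClosedXor3 R) (s : Finset V)
    (hs : ↑s ⊆ edgeDirs R) {x : V → Bool} (hx : x ∈ R) :
    ∃ h : flipAt s x ∈ R, (solGraph R).Reachable ⟨x, hx⟩ ⟨flipAt s x, h⟩ := by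
  induction s using Finset.induction_on with
  | empty =>
    simp only [flipAt_empty]
    exact ⟨hx, .rfl⟩
  | @insert i s hi ih =>
    obtain ⟨hy, hxy⟩ := ih ((Finset.coe_subset.mpr (Finset.subset_insert i s)).trans hs)
    have hz := hR.flipAt_singleton_mem (hs (Finset.mem_insert_self i s)) hy
    have hyz : (solGraph R).Adj ⟨_, hy⟩ ⟨_, hz⟩ := by
      change hammingDist _ _ = 1
      rw [hammingDist_eq_card_diffCoords, diffCoords_flipAt, Finset.card_singleton]
    rw [flipAt_insert hi]
    exact ⟨hz, hxy.trans hyz.reachable⟩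

theorem ClosedXor3.compClosedMaj (hR : ClosedXor3 R) : CompClosedMaj R := by
  intro a b c ha _ _ ⟨w⟩ _
  rw [majVec_eq_flipAt]
  refine hR.exists_reachable_flipAt _ ?_ ha
  exact (Finset.coe_subset.mpr Finset.inter_subset_left).trans
    (diffCoords_subset_edgeDirs_of_walk w)

end EdgeDirections

section TwoCoordinates

variable {r : ℕ} {R : Set (Fin r → Bool)}

theorem xor_xor_subst2 (i j : Fin r) (c : Fin r → Bool) (x y x' y' x'' y'' : Bool) :
    (fun k => xor (subst2 i j c x y k) (xor (subst2 i j c x' y' k) (subst2 i j c x'' y'' k))) =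
      subst2 i j c (xor x (xor x' x'')) (xor y (xor y' y'')) := by
  funext k
  unfold subst2
  split_ifs <;> simp

theorem ClosedXor3.subst2_mem (hR : ClosedXor3 R) {i j : Fin r} {c : Fin r → Bool}
    {x y x' y' x'' y'' : Bool} (h : subst2 i j c x y ∈ R) (h' : subst2 i j c x' y' ∈ R)
    (h'' : subst2 i j c x'' y'' ∈ R) :
    subst2 i j c (xor x (xor x' x'')) (xor y (xor y' y'')) ∈ R :=
  xor_xor_subst2 i j c x y x' y' x'' y'' ▸ hR _ _ _ h h' h''

theorem ClosedXor3.orFree (hR : ClosedXor3 R) : ORfree R := by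
  rintro ⟨i, j, -, c, h⟩
  have h00 := hR.subst2_mem ((h true false).2 rfl) ((h false true).2 rfl) ((h true true).2 rfl)
  simpa using (h false false).1 h00

theorem ClosedXor3.nandFree (hR : ClosedXor3 R) : NANDfree R := by
  rintro ⟨i, j, -, c, h⟩
  have h11 := hR.subst2_mem ((h false false).2 rfl) ((h false true).2 rfl) ((h true false).2 rfl)
  simpa using (h true true).1 h11

end TwoCoordinates

theorem affine_is_componentwiseBijunctive_ORfree_NANDfree_general {r : ℕ}
    (R : Set (Fin r → Bool))
    (hxor : ∀ a b c, a ∈ R → b ∈ R → c ∈ R →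
      (fun i => xor (a i) (xor (b i) (c i))) ∈ R) :
    CompClosedMaj R ∧ ORfree R ∧ NANDfree R := by
  have hR : ClosedXor3 R := hxor
  exact ⟨hR.compClosedMaj, hR.orFree, hR.nandFree⟩

/-- Every affine relation (closed under coordinatewise `a ⊕ b ⊕ c`) is
componentwise bijunctive, OR-free, and NAND-free. -/
theorem affine_is_componentwiseBijunctive_ORfree_NANDfree {r : ℕ}
    (R : Set (Fin r → Bool)) (hR : R.Nonempty)
    (hxor : ∀ a b c, a ∈ R → b ∈ R → c ∈ R →
      (fun i => xor (a i) (xor (b i) (c i))) ∈ R) :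
    CompClosedMaj R ∧ ORfree R ∧ NANDfree R :=
  affine_is_componentwiseBijunctive_ORfree_NANDfree_general R hxor
end

section
/- Every logical relation R ⊆ {0,1}^k of arity k ≥ 1 is faithfully expressible from S_3, the set of 3-clause relations. -/
open SimpleGraph

/-!
`R` is the conjunction, over the points `u ∉ R`, of the clauses `⋁ᵢ (xᵢ ≠ uᵢ)`. Each such clause
is split into the 3-clauses `¬zᵢ ∨ (xᵢ ≠ uᵢ) ∨ zᵢ₊₁` along fresh variables `z₀, …, z_k` with
`z₀ = 1`, `z_k = 0`. For a fixed `x`, the witnesses of one chain have a least element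
(`zᵢ = 1` iff `x` agrees with `u` before `i`), and any other witness can be lowered to it one bit
at a time, so the witness graph is connected. For neighbours `a, b ∈ R`, the chain that sets
`zᵢ = 1` iff no coordinate before `i` has both `aⱼ ≠ uⱼ` and `bⱼ ≠ uⱼ` is a common witness: such a
coordinate exists because `a` and `b` differ in one place and are both different from `u`.
-/

section Hamming

variable {V : Type*} [Fintype V]

lemma hammingDist_update_of_ne [DecidableEq V] {y : V → Bool} {c : V} {b : Bool} (h : y c ≠ b) :
    hammingDist y (Function.update y c b) = 1 := by
  refine Finset.card_eq_one.mpr ⟨c, Finset.ext fun j => ?_⟩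
  by_cases hj : j = c
  · subst hj; simpa using h
  · simp [hj]

lemma hammingDist_update_lt [DecidableEq V] {y p : V → Bool} {c : V} (h : y c ≠ p c) :
    hammingDist (Function.update y c (p c)) p < hammingDist y p := by
  refine Finset.card_lt_card ⟨fun j hj => ?_, fun hsub => ?_⟩
  · by_cases hj' : j = c
    · subst hj'; simp at hj
    · simpa [hj'] using hj
  · simpa using hsub (by simpa using h : c ∈ Finset.univ.filter fun j => y j ≠ p j)

lemma exists_ne_and_ne_of_hammingDist_eq_one {a b u : V → Bool} (hab : hammingDist a b = 1)
    (ha : a ≠ u) (hb : b ≠ u) : ∃ j, a j ≠ u j ∧ b j ≠ u j := by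
  have hq : ∀ i j, a i ≠ b i → a j ≠ b j → i = j := fun i j hi hj =>
    Finset.card_le_one.mp hab.le i (by simpa using hi) j (by simpa using hj)
  obtain ⟨i, hi⟩ := Function.ne_iff.mp ha
  obtain ⟨j, hj⟩ := Function.ne_iff.mp hb
  by_cases hbi : b i = u i
  · by_cases haj : a j = u j
    · have := hq i j (hbi ▸ hi) (haj ▸ hj.symm)
      subst this
      exact absurd haj hi
    · exact ⟨j, haj, hj⟩
  · exact ⟨i, hi, hbi⟩

end Hamming

def FlipsToward {V : Type*} [DecidableEq V] (D : Set (V → Bool)) (p : V → Bool) : Prop :=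
  ∀ y ∈ D, y ≠ p → ∃ c, y c ≠ p c ∧ Function.update y c (p c) ∈ D

lemma solGraph_connected_of_flipsToward {V : Type*} [Fintype V] [DecidableEq V]
    {D : Set (V → Bool)} {p : V → Bool} (hp : p ∈ D) (h : FlipsToward D p) :
    (solGraph D).Connected := by
  have reach : ∀ n, ∀ y (hy : y ∈ D), hammingDist y p = n →
      (solGraph D).Reachable ⟨y, hy⟩ ⟨p, hp⟩ := by
    intro n
    induction n using Nat.strong_induction_on with
    | _ n ih =>
      intro y hy hn
      by_cases hyp : y = p
      · subst hyp; rfl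
      obtain ⟨c, hc, hy'⟩ := h y hy hyp
      have hadj : (solGraph D).Adj ⟨y, hy⟩ ⟨_, hy'⟩ := hammingDist_update_of_ne hc
      exact hadj.reachable.trans (ih _ (hn ▸ hammingDist_update_lt hc) _ hy' rfl)
  have : Nonempty D := ⟨⟨p, hp⟩⟩
  exact ⟨fun ⟨y, hy⟩ ⟨y', hy'⟩ => (reach _ y hy rfl).trans (reach _ y' hy' rfl).symm⟩

lemma flipsToward_prod {U I W : Type*} [DecidableEq I] [DecidableEq W] (e : U × I ≃ W)
    {Z : U → Set (I → Bool)} {p : U → I → Bool} (h : ∀ u, FlipsToward (Z u) (p u)) :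
    FlipsToward {y : W → Bool | ∀ u, (fun i => y (e (u, i))) ∈ Z u}
      (fun w => p (e.symm w).1 (e.symm w).2) := by
  intro y hy hyp
  obtain ⟨u, hu⟩ : ∃ u, (fun i => y (e (u, i))) ≠ p u := by
    by_contra! hall
    refine hyp (funext fun w => ?_)
    simpa using congrFun (hall (e.symm w).1) (e.symm w).2
  obtain ⟨i, hi, hmem⟩ := h u _ (hy u) hu
  refine ⟨e (u, i), by simpa using hi, fun u' => ?_⟩
  by_cases hu' : u' = u
  · subst hu'
    convert hmem using 1
    ext i'
    simp [Function.update_apply, e.injective.eq_iff]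
  · convert hy u' using 1
    ext i'
    simp [e.injective.eq_iff, hu']

namespace Chain

variable {k : ℕ}

/-- The splitting of the clause `l₀ ∨ ⋯ ∨ l_{k-1}` into 3-clauses; `zᵢ` records that
`lᵢ ∨ ⋯ ∨ l_{k-1}` must still hold. -/
def Sat (l : Fin k → Bool) (z : Fin (k + 1) → Bool) : Prop :=
  z 0 = true ∧ z (Fin.last k) = false ∧
    ∀ i : Fin k, z i.castSucc = true → l i = true ∨ z i.succ = true

def prefixAll (Q : Fin k → Prop) [DecidablePred Q] (i : Fin (k + 1)) : Bool :=
  decide (∀ j : Fin k, j.castSucc < i → Q j)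

lemma prefixAll_zero (Q : Fin k → Prop) [DecidablePred Q] : prefixAll Q 0 = true := by
  simp [prefixAll]

lemma prefixAll_succ (Q : Fin k → Prop) [DecidablePred Q] (i : Fin k) :
    prefixAll Q i.succ = (prefixAll Q i.castSucc && decide (Q i)) := by
  simp only [prefixAll, Fin.castSucc_lt_succ_iff, Fin.castSucc_lt_castSucc_iff, le_iff_lt_or_eq,
    or_imp, forall_and, forall_eq, Bool.decide_and]

lemma prefixAll_last (Q : Fin k → Prop) [DecidablePred Q] :
    prefixAll Q (Fin.last k) = decide (∀ j, Q j) := by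
  simp [prefixAll, Fin.castSucc_lt_last]

lemma sat_prefixAll {l : Fin k → Bool} {Q : Fin k → Prop} [DecidablePred Q]
    (hQ : ∀ j, l j = false → Q j) (hex : ∃ j, ¬ Q j) : Sat l (prefixAll Q) := by
  refine ⟨prefixAll_zero Q, by simpa [prefixAll_last] using hex, fun i hi => ?_⟩
  cases hl : l i
  · simp [prefixAll_succ, hi, hQ i hl]
  · exact Or.inl rfl

def least (l : Fin k → Bool) : Fin (k + 1) → Bool :=
  prefixAll fun j => l j = false

lemma sat_least {l : Fin k → Bool} (hl : ∃ j, l j = true) : Sat l (least l) :=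
  sat_prefixAll (fun _ => id) (by simpa using hl)

lemma eq_true_of_least_eq_true {l : Fin k → Bool} {z : Fin (k + 1) → Bool} (hz : Sat l z)
    (i : Fin (k + 1)) (hi : least l i = true) : z i = true := by
  induction i using Fin.induction with
  | zero => exact hz.1
  | succ i ih =>
    simp only [least, prefixAll_succ, Bool.and_eq_true, decide_eq_true_eq] at hi
    exact (hz.2.2 i (ih hi.1)).resolve_left (by simp [hi.2])

lemma not_sat_of_forall_eq_false {l : Fin k → Bool} (hl : ∀ j, l j = false)
    (z : Fin (k + 1) → Bool) : ¬ Sat l z := fun hz => by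
  have hleast : least l (Fin.last k) = true := by simpa [least, prefixAll_last] using hl
  simpa [hz.2.1] using eq_true_of_least_eq_true hz _ hleast

/-- Switching off the first variable where `z` exceeds the least witness keeps the chain
satisfied: the clause just before that variable is then satisfied by its literal. -/
lemma flipsToward_least (l : Fin k → Bool) : FlipsToward {z | Sat l z} (least l) := by
  intro z hz hne
  obtain ⟨i, hi, hmin⟩ : ∃ i, z i ≠ least l i ∧ ∀ j < i, z j = least l j := by
    obtain ⟨i, hi, hmin⟩ := (Finset.univ.filter fun i => z i ≠ least l i).exists_minimal
      (by simpa [Finset.filter_nonempty_iff, Function.ne_iff] using hne)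
    exact ⟨i, by simpa using hi, fun j hj => by
      by_contra h
      exact (hmin (by simpa using h) hj.le).not_gt hj⟩
  have hzi : z i = true ∧ least l i = false := by
    cases h : least l i
    · exact ⟨by simpa [h] using hi, rfl⟩
    · exact absurd (eq_true_of_least_eq_true hz i h) (by simpa [h] using hi)
  have hi0 : i ≠ 0 := fun h => hi (by simp [h, hz.1, least, prefixAll_zero])
  have hilast : i ≠ Fin.last k := fun h => by simp [h, hz.2.1] at hzi
  refine ⟨i, hi, ?_, ?_, fun j hj => ?_⟩
  · simpa [Function.update_of_ne hi0.symm] using hz.1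
  · simpa [Function.update_of_ne hilast.symm] using hz.2.1
  · by_cases hji : j.castSucc = i
    · subst hji; simp [hzi.2] at hj
    rw [Function.update_of_ne hji] at hj
    by_cases hjs : j.succ = i
    · subst hjs
      have hprev : least l j.castSucc = true := hmin _ Fin.castSucc_lt_succ ▸ hj
      have hsucc : least l j.succ = false := hzi.2
      simp only [least, prefixAll_succ] at hprev hsucc
      simp [hprev] at hsucc
      exact Or.inl hsucc
    · simpa [Function.update_of_ne hjs] using hz.2.2 j hj

end Chain

def clause3 {V : Type*} (D : Set (Fin 3 → Bool)) (p q r : V) : BClause V :=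
  ⟨3, D, ![.inl p, .inl q, .inl r]⟩

lemma clause3_sat_iff {V : Type*} (D : Set (Fin 3 → Bool)) (p q r : V) (ρ : V → Bool) :
    (clause3 D p q r).Sat ρ ↔ ![ρ p, ρ q, ρ r] ∈ D := by
  have h : (fun j => Sum.elim ρ id (![.inl p, .inl q, .inl r] j)) = ![ρ p, ρ q, ρ r] := by
    ext j
    fin_cases j <;> rfl
  exact h ▸ Iff.rfl

/-- The clause `⋁ᵢ (xᵢ ≠ uᵢ)`, split into 3-clauses along the chain variables `z`;
the literal `xᵢ ≠ uᵢ` is `xᵢ` or `¬xᵢ`, whence `D₁` or `D₂`. -/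
def chainCnf {V : Type*} {k : ℕ} (x : Fin k → V) (u : Fin k → Bool) (z : Fin (k + 1) → V) :
    BCnf V :=
  clause3 (Dclause 0) (z 0) (z 0) (z 0) ::
  clause3 (Dclause 3) (z (Fin.last k)) (z (Fin.last k)) (z (Fin.last k)) ::
  List.ofFn fun i => clause3 (Dclause (if u i then 2 else 1)) (z i.castSucc) (x i) (z i.succ)

lemma chainCnf_over {V : Type*} {k : ℕ} (x : Fin k → V) (u : Fin k → Bool)
    (z : Fin (k + 1) → V) : (chainCnf x u z).Over S3 := by
  intro C hC
  simp only [chainCnf, List.mem_cons, List.mem_ofFn] at hC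
  rcases hC with rfl | rfl | ⟨i, rfl⟩
  · exact Or.inl rfl
  · exact Or.inr (Or.inr (Or.inr rfl))
  · cases u i
    · exact Or.inr (Or.inl rfl)
    · exact Or.inr (Or.inr (Or.inl rfl))

lemma chainCnf_sat_iff {V : Type*} {k : ℕ} (x : Fin k → V) (u : Fin k → Bool)
    (z : Fin (k + 1) → V) (ρ : V → Bool) :
    (chainCnf x u z).Sat ρ ↔ Chain.Sat (fun i => ρ (x i) != u i) (ρ ∘ z) := by
  simp only [BCnf.Sat, chainCnf, List.forall_mem_cons, List.forall_mem_ofFn_iff, clause3_sat_iff,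
    Chain.Sat, Function.comp]
  refine and_congr (by simp [Dclause, Fin.exists_fin_succ]) (and_congr
    (by simp [Dclause, Fin.exists_fin_succ]) (forall_congr' fun i => ?_))
  cases u i <;> cases ρ (z i.castSucc) <;> simp [Dclause, Fin.exists_fin_succ]

section Chains

variable {k m : ℕ} {U : Type*} [Fintype U] (v : U → Fin k → Bool) (e : U × Fin (k + 1) ≃ Fin m)

noncomputable def chainsCnf : BCnf (Fin k ⊕ Fin m) :=
  Finset.univ.toList.flatMap fun u => chainCnf Sum.inl (v u) fun i => Sum.inr (e (u, i))

lemma chainsCnf_over : (chainsCnf v e).Over S3 := by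
  intro C hC
  obtain ⟨u, -, hC⟩ := List.mem_flatMap.mp hC
  exact chainCnf_over _ _ _ C hC

lemma chainsCnf_sat_iff (a : Fin k → Bool) (y : Fin m → Bool) :
    (chainsCnf v e).Sat (Sum.elim a y) ↔
      ∀ u, Chain.Sat (fun i => a i != v u i) fun i => y (e (u, i)) := by
  simp only [BCnf.Sat, chainsCnf, List.mem_flatMap, Finset.mem_toList, Finset.mem_univ,
    true_and, forall_exists_index]
  exact forall_comm.trans (forall_congr' fun u => chainCnf_sat_iff _ _ _ _)

lemma setOf_chainsCnf_sat (a : Fin k → Bool) :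
    {y | (chainsCnf v e).Sat (Sum.elim a y)} =
      {y | ∀ u, (fun i => y (e (u, i))) ∈ {z | Chain.Sat (fun i => a i != v u i) z}} :=
  Set.ext fun y => chainsCnf_sat_iff v e a y

variable {v e}

lemma chainsCnf_sat_least {a : Fin k → Bool} (ha : ∀ u, v u ≠ a) :
    (chainsCnf v e).Sat
      (Sum.elim a fun w => Chain.least (fun i => a i != v (e.symm w).1 i) (e.symm w).2) := by
  refine (chainsCnf_sat_iff v e _ _).mpr fun u => ?_
  obtain ⟨j, hj⟩ := Function.ne_iff.mp (ha u).symm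
  simpa using Chain.sat_least ⟨j, by simpa using hj⟩

lemma exists_chainsCnf_sat_iff (a : Fin k → Bool) :
    (∃ y, (chainsCnf v e).Sat (Sum.elim a y)) ↔ ∀ u, v u ≠ a := by
  refine ⟨fun ⟨y, hy⟩ u hu => ?_, fun ha => ⟨_, chainsCnf_sat_least ha⟩⟩
  exact Chain.not_sat_of_forall_eq_false (by simp [hu]) _ ((chainsCnf_sat_iff v e a y).mp hy u)

lemma solGraph_chainsCnf_connected {a : Fin k → Bool} (ha : ∀ u, v u ≠ a) :
    (solGraph {y | (chainsCnf v e).Sat (Sum.elim a y)}).Connected := by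
  have hp : _ ∈ {y | (chainsCnf v e).Sat (Sum.elim a y)} := chainsCnf_sat_least ha
  rw [setOf_chainsCnf_sat] at hp ⊢
  exact solGraph_connected_of_flipsToward hp (flipsToward_prod e fun u => Chain.flipsToward_least _)

lemma exists_chainsCnf_sat_of_hammingDist_eq_one {a b : Fin k → Bool} (hab : hammingDist a b = 1)
    (ha : ∀ u, v u ≠ a) (hb : ∀ u, v u ≠ b) :
    ∃ w, (chainsCnf v e).Sat (Sum.elim a w) ∧ (chainsCnf v e).Sat (Sum.elim b w) := by
  refine ⟨fun w => Chain.prefixAll (fun j =>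
    ((a j != v (e.symm w).1 j) && (b j != v (e.symm w).1 j)) = false) (e.symm w).2, ?_, ?_⟩ <;>
  · refine (chainsCnf_sat_iff v e _ _).mpr fun u => ?_
    simp only [Equiv.symm_apply_apply]
    refine Chain.sat_prefixAll (fun j hj => by simp [hj]) ?_
    simpa using exists_ne_and_ne_of_hammingDist_eq_one hab (ha u).symm (hb u).symm

end Chains

theorem faithfullyExpressible_compl_range {k : ℕ} {U : Type*} [Fintype U]
    (v : U → Fin k → Bool) : FaithfullyExpressible S3 (Set.range v)ᶜ := by
  have hmem : ∀ a, a ∈ (Set.range v)ᶜ ↔ ∀ u, v u ≠ a := by simp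
  refine ⟨_, chainsCnf v (Fintype.equivFin (U × Fin (k + 1))), chainsCnf_over _ _,
    fun a => (hmem a).trans (exists_chainsCnf_sat_iff a).symm,
    fun a ha => solGraph_chainsCnf_connected ((hmem a).mp ha),
    fun a b ha hb hab =>
      exists_chainsCnf_sat_of_hammingDist_eq_one hab ((hmem a).mp ha) ((hmem b).mp hb)⟩

theorem every_relation_expressible_from_S3_general {k : ℕ}
    (R : Set (Fin k → Bool)) :
    FaithfullyExpressible S3 R := by
  classical
  simpa only [Subtype.range_coe, compl_compl] using
    faithfullyExpressible_compl_range (Subtype.val : ↥Rᶜ → Fin k → Bool)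

/-- Every logical relation of arity `k ≥ 1` is faithfully expressible from
`S₃`, the set of 3-clause relations. -/
theorem every_relation_expressible_from_S3 {k : ℕ} (hk : 1 ≤ k)
    (R : Set (Fin k → Bool)) (hR : R.Nonempty) :
    FaithfullyExpressible S3 R :=
  every_relation_expressible_from_S3_general R
end

section
/- Let ψ be a satisfiable 2-CNF formula over variables x_1,...,x_m in which every clause is a disjunction of two literals on two distinct variables, and suppose no variable is forced: for each variable x_i and each value v ∈ {0,1} there is a solution of ψ assigning v to x_i. Define the implication graph of ψ: its vertices are the 2m literals x_1,...,x_m, ¬x_1,...,¬x_m, with a directed edge from literal l_1 to literal l_2 iff ψ contains a clause consisting of l_2 and the negation of l_1. Then the solution graph G(ψ) is disconnected if and only if the implication graph contains a directed cycle. -/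
/-!
A cycle through a literal `l` starts with an edge `l → b` to a literal of another variable and
returns to `l`, so `l ↔ b` holds on every solution. Hence no edge of the solution graph flips the
variable of `l`, and since that variable is not forced, solutions giving it different values lie
in different components.

Without a cycle, implication is well founded. For solutions `x ≠ y`, take a literal `l`, true in
`x` and false in `y`, that is minimal for implication among such literals, and flip its variable
in `x`. A clause broken by the flip would contain `l` and a literal `q` false in `x` and true in
`y`; then `¬q` is again such a literal and `¬q → l` is an edge, against minimality. So `x` moves
one step closer to `y` within the solutions.
-/

open SimpleGraph

/-- A literal over `m` variables: a variable together with its sign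
(`true` = positive literal). -/
abbrev Lit (m : ℕ) := Fin m × Bool

/-- The negation of a literal. -/
def Lit.neg {m : ℕ} (l : Lit m) : Lit m := (l.1, !l.2)

/-- The literal `l` is satisfied by the assignment `x`. -/
def litSat {m : ℕ} (x : Fin m → Bool) (l : Lit m) : Prop := x l.1 = l.2

/-- A 2-CNF formula: a list of clauses, each a disjunction of two literals. -/
abbrev TwoCnf (m : ℕ) := List (Lit m × Lit m)

/-- `x` satisfies every clause of `ψ`. -/
def TwoCnf.Sat {m : ℕ} (ψ : TwoCnf m) (x : Fin m → Bool) : Prop :=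
  ∀ C ∈ ψ, litSat x C.1 ∨ litSat x C.2

/-- The implication graph of `ψ`: a directed edge from `l₁` to `l₂` iff `ψ` contains a
clause consisting of `l₂` and the negation of `l₁`. -/
def impEdge {m : ℕ} (ψ : TwoCnf m) (l₁ l₂ : Lit m) : Prop :=
  ∃ C ∈ ψ, C = (Lit.neg l₁, l₂) ∨ C = (l₂, Lit.neg l₁)

open Function

section Hamming

variable {ι : Type*} [Fintype ι] {β : Type*} [DecidableEq β]

lemma hammingDist_update_self [DecidableEq ι] {x : ι → β} {i : ι} {v : β} (hv : v ≠ x i) :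
    hammingDist x (update x i v) = 1 := by
  rw [hammingDist, Finset.card_eq_one]
  refine ⟨i, Finset.ext fun j => ?_⟩
  by_cases hj : j = i
  · subst hj; simp [hv.symm]
  · simp [hj]

lemma hammingDist_update_lt_s18 [DecidableEq ι] {x y : ι → β} {i : ι} (hi : x i ≠ y i) :
    hammingDist (update x i (y i)) y < hammingDist x y := by
  refine Finset.card_lt_card ⟨fun j => ?_, fun h => ?_⟩
  · by_cases hj : j = i
    · subst hj; simp
    · simp [hj]
  · simpa [hi] using h (Finset.mem_filter.2 ⟨Finset.mem_univ i, hi⟩)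

lemma eq_of_hammingDist_eq_one {x y : ι → β} (h : hammingDist x y = 1) {i j : ι}
    (hi : x i ≠ y i) (hj : x j ≠ y j) : i = j :=
  Finset.card_le_one.1 h.le i (by simpa using hi) j (by simpa using hj)

end Hamming

section SolGraph

variable {V : Type*} [Fintype V] [DecidableEq V] {D : Set (V → Bool)}

lemma solGraph_preconnected_of_exists_update
    (h : ∀ x ∈ D, ∀ y ∈ D, x ≠ y → ∃ i, x i ≠ y i ∧ update x i (y i) ∈ D) :
    (solGraph D).Preconnected := by
  suffices ∀ n (x y : D), hammingDist x.1 y.1 = n → (solGraph D).Reachable x y from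
    fun x y => this _ x y rfl
  intro n
  induction n using Nat.strong_induction_on with
  | _ n ih =>
    rintro ⟨x, hx⟩ ⟨y, hy⟩ rfl
    by_cases hxy : x = y
    · subst hxy; rfl
    obtain ⟨i, hi, hx'⟩ := h x hx y hy hxy
    have hadj : (solGraph D).Adj ⟨x, hx⟩ ⟨update x i (y i), hx'⟩ :=
      hammingDist_update_self hi.symm
    exact hadj.reachable.trans (ih _ (hammingDist_update_lt_s18 hi) _ _ rfl)

lemma solGraph_reachable_apply_eq {i : V}
    (h : ∀ x ∈ D, ∀ y ∈ D, hammingDist x y = 1 → x i = y i) {x y : D}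
    (hxy : (solGraph D).Reachable x y) : x.1 i = y.1 i := by
  obtain ⟨w⟩ := hxy
  induction w with
  | nil => rfl
  | cons hadj _ ih => exact (h _ (Subtype.prop _) _ (Subtype.prop _) hadj).trans ih

lemma solGraph_not_connected_of_forall_iff {i j : V} (hij : i ≠ j) {c d : Bool}
    (hD : ∀ x ∈ D, (x i = c ↔ x j = d)) {x y : V → Bool} (hx : x ∈ D) (hy : y ∈ D)
    (hxy : x i ≠ y i) : ¬ (solGraph D).Connected := by
  intro hconn
  refine hxy (solGraph_reachable_apply_eq (fun u hu v hv huv => ?_) (hconn ⟨x, hx⟩ ⟨y, hy⟩))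
  by_contra hi
  have hj : u j = v j := by_contra fun hj => hij (eq_of_hammingDist_eq_one huv hi hj)
  have := (hD u hu).trans (hj ▸ (hD v hv).symm)
  cases hu : u i <;> cases hv : v i <;> cases c <;> simp_all

end SolGraph

@[simp] lemma Lit.neg_fst {m : ℕ} (l : Lit m) : l.neg.1 = l.1 := rfl

@[simp] lemma Lit.neg_neg {m : ℕ} (l : Lit m) : l.neg.neg = l := by simp [Lit.neg]

section TwoCnf

variable {m : ℕ} {x : Fin m → Bool}

@[simp] lemma litSat_neg {l : Lit m} : litSat x l.neg ↔ ¬ litSat x l := by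
  simp only [litSat, Lit.neg]
  cases x l.1 <;> cases l.2 <;> decide

lemma litSat_update_of_ne {l : Lit m} {i : Fin m} (h : l.1 ≠ i) (v : Bool) :
    litSat (update x i v) l ↔ litSat x l := by
  rw [litSat, litSat, update_of_ne h]

variable {ψ : TwoCnf m}

lemma impEdge_neg_left_of_mem {p q : Lit m} (hC : (p, q) ∈ ψ) : impEdge ψ p.neg q :=
  ⟨_, hC, Or.inl (by simp)⟩

lemma impEdge_neg_right_of_mem {p q : Lit m} (hC : (p, q) ∈ ψ) : impEdge ψ q.neg p :=
  ⟨_, hC, Or.inr (by simp)⟩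

lemma impEdge.fst_ne_fst (hdistinct : ∀ C ∈ ψ, (C.1).1 ≠ (C.2).1) {l₁ l₂ : Lit m}
    (h : impEdge ψ l₁ l₂) : l₁.1 ≠ l₂.1 := by
  obtain ⟨C, hC, rfl | rfl⟩ := h
  · simpa using hdistinct _ hC
  · simpa using (hdistinct _ hC).symm

lemma TwoCnf.Sat.litSat_of_impEdge (hx : ψ.Sat x) {l₁ l₂ : Lit m} (h : impEdge ψ l₁ l₂)
    (h₁ : litSat x l₁) : litSat x l₂ := by
  obtain ⟨C, hC, rfl | rfl⟩ := h
  · exact (hx _ hC).resolve_left (litSat_neg.not_left.2 h₁)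
  · exact (hx _ hC).resolve_right (litSat_neg.not_left.2 h₁)

lemma TwoCnf.Sat.litSat_of_reflTransGen (hx : ψ.Sat x) {l₁ l₂ : Lit m}
    (h : Relation.ReflTransGen (impEdge ψ) l₁ l₂) (h₁ : litSat x l₁) : litSat x l₂ := by
  induction h with
  | refl => exact h₁
  | tail _ he ih => exact hx.litSat_of_impEdge he ih

lemma TwoCnf.exists_litSat_iff_of_transGen (hdistinct : ∀ C ∈ ψ, (C.1).1 ≠ (C.2).1)
    {l : Lit m} (hl : Relation.TransGen (impEdge ψ) l l) :
    ∃ b : Lit m, l.1 ≠ b.1 ∧ ∀ x, ψ.Sat x → (litSat x l ↔ litSat x b) := by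
  obtain ⟨b, hlb, hbl⟩ := Relation.TransGen.head'_iff.1 hl
  exact ⟨b, hlb.fst_ne_fst hdistinct,
    fun x hx => ⟨hx.litSat_of_impEdge hlb, hx.litSat_of_reflTransGen hbl⟩⟩

lemma TwoCnf.Sat.update_of_minimal (hdistinct : ∀ C ∈ ψ, (C.1).1 ≠ (C.2).1)
    {y : Fin m → Bool} (hx : ψ.Sat x) (hy : ψ.Sat y) {l : Lit m} (hlx : litSat x l)
    (hly : ¬ litSat y l) (hmin : ∀ a, litSat x a → ¬ litSat y a → ¬ impEdge ψ a l) :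
    ψ.Sat (update x l.1 (y l.1)) := by
  have key : ∀ p q : Lit m, q.1 ≠ l.1 → impEdge ψ q.neg p → litSat x p ∨ litSat x q →
      litSat y p ∨ litSat y q → litSat (update x l.1 (y l.1)) p ∨
        litSat (update x l.1 (y l.1)) q := by
    intro p q hq hqp hxpq hypq
    rw [litSat_update_of_ne hq]
    by_cases hxq : litSat x q
    · exact Or.inr hxq
    have hxp := hxpq.resolve_right hxq
    by_cases hp : p.1 = l.1
    · have hpl : p = l := Prod.ext hp (hxp.symm.trans (hp ▸ hlx))
      subst hpl
      exact absurd hqp (hmin _ (litSat_neg.2 hxq) (by simpa using hypq.resolve_left hly))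
    · exact Or.inl ((litSat_update_of_ne hp _).2 hxp)
  rintro ⟨p, q⟩ hC
  rcases eq_or_ne q.1 l.1 with hq | hq
  · exact (key q p (hq ▸ hdistinct _ hC) (impEdge_neg_left_of_mem hC) (hx _ hC).symm
      (hy _ hC).symm).symm
  · exact key p q hq (impEdge_neg_right_of_mem hC) (hx _ hC) (hy _ hC)

lemma TwoCnf.exists_update_sat_of_acyclic (hdistinct : ∀ C ∈ ψ, (C.1).1 ≠ (C.2).1)
    (hacyc : ∀ l : Lit m, ¬ Relation.TransGen (impEdge ψ) l l) {y : Fin m → Bool}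
    (hx : ψ.Sat x) (hy : ψ.Sat y) (hxy : x ≠ y) :
    ∃ i, x i ≠ y i ∧ ψ.Sat (update x i (y i)) := by
  have hwf : WellFounded (impEdge ψ) :=
    Subrelation.wf Relation.TransGen.single
      (@Finite.wellFounded_of_trans_of_irrefl _ _ _ ⟨fun _ _ _ => Relation.TransGen.trans⟩
        ⟨hacyc⟩)
  obtain ⟨i, hi⟩ := Function.ne_iff.1 hxy
  obtain ⟨l, ⟨hlx, hly⟩, hmin⟩ :=
    hwf.has_min {l | litSat x l ∧ ¬ litSat y l} ⟨(i, x i), rfl, Ne.symm hi⟩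
  exact ⟨l.1, fun h => hly (h.symm.trans hlx),
    hx.update_of_minimal hdistinct hy hlx hly fun a ha ha' => hmin a ⟨ha, ha'⟩⟩

end TwoCnf

/-- For a satisfiable 2-CNF formula with clauses on distinct variables and
no forced variable, the solution graph is disconnected iff the implication graph contains
a directed cycle. -/
theorem twoCnf_disconnected_iff_implication_cycle {m : ℕ} (ψ : TwoCnf m)
    (hdistinct : ∀ C ∈ ψ, (C.1).1 ≠ (C.2).1)
    (hsat : ∃ x, ψ.Sat x)
    (hfree : ∀ (i : Fin m) (v : Bool), ∃ x, ψ.Sat x ∧ x i = v) :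
    ¬ (solGraph {x : Fin m → Bool | ψ.Sat x}).Connected ↔
      ∃ l : Lit m, Relation.TransGen (impEdge ψ) l l := by
  constructor
  · intro hdisc
    by_contra! hacyc
    obtain ⟨x₀, hx₀⟩ := hsat
    have hpre := solGraph_preconnected_of_exists_update fun x hx y hy hxy =>
      ψ.exists_update_sat_of_acyclic hdistinct hacyc hx hy hxy
    exact hdisc ((connected_iff _).2 ⟨hpre, ⟨⟨x₀, hx₀⟩⟩⟩)
  · rintro ⟨l, hl⟩
    obtain ⟨b, hlb, hiff⟩ := ψ.exists_litSat_iff_of_transGen hdistinct hl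
    obtain ⟨x, hx, hxl⟩ := hfree l.1 l.2
    obtain ⟨y, hy, hyl⟩ := hfree l.1 (!l.2)
    exact solGraph_not_connected_of_forall_iff hlb hiff hx hy (by simp [hxl, hyl])
end
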